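/- Let t > 0 and let g = a_t, the automorphism of B^m given by a_t(z) = (cosh(t)z₁ + sinh(t), z₂, …, z_m)/(sinh(t)z₁ + cosh(t)). If z = c·e₁ with c ∈ ℂ, |c| ≤ 1, c ≠ ±1, then lim_{n→∞} (1/n) log ‖gⁿ(z) − e₁‖ = −2t. -/

import Mathlib

/-!
On the line `ℂ e₁` the automorphism `a_t` acts by the Möbius map
`w ↦ (cosh t · w + sinh t) / (sinh t · w + cosh t)` of the closed disc, and these maps form a
one-parameter group, so `gⁿ(c e₁)` is the map with parameter `n t` applied to `c`. Writing `sinh`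
and `cosh` through exponentials,
`aTLine x c - 1 = 2 (c - 1) e^{-2x} / ((c + 1) + (1 - c) e^{-2x})`,
so for `c ≠ ±1` the quantity `‖gⁿ(z) - e₁‖ e^{2nt}` tends to the nonzero constant
`2 ‖c - 1‖ / ‖c + 1‖`, and taking logarithms gives the rate `-2t`.
-/

open Metric Filter

noncomputable section

/-- The one-parameter family of automorphisms `a_t` of the unit ball in `ℂ^m`:
`a_t(z) = (cosh(t) z₁ + sinh(t), z₂, …, z_m) / (sinh(t) z₁ + cosh(t))`. -/
def aT {m : ℕ} [NeZero m] (t : ℝ) (z : EuclideanSpace ℂ (Fin m)) : EuclideanSpace ℂ (Fin m) :=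
  WithLp.toLp 2 (fun i => (if i = 0 then (Real.cosh t : ℂ) * z 0 + Real.sinh t else z i) /
    ((Real.sinh t : ℂ) * z 0 + Real.cosh t))

open Real Topology

def aTLine (t : ℝ) (w : ℂ) : ℂ := (cosh t * w + sinh t) / (sinh t * w + cosh t)

lemma aT_smul_single {m : ℕ} [NeZero m] (t : ℝ) (w : ℂ) :
    aT t (w • EuclideanSpace.single (0 : Fin m) (1 : ℂ)) =
      aTLine t w • EuclideanSpace.single 0 1 := by
  ext i
  by_cases hi : i = 0 <;> simp [aT, aTLine, hi]

lemma abs_sinh_lt_cosh (x : ℝ) : |sinh x| < cosh x :=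
  abs_lt.2 ⟨by linarith [cosh_add_sinh x ▸ exp_pos x], sinh_lt_cosh x⟩

lemma sinh_mul_add_cosh_ne_zero {w : ℂ} (hw : ‖w‖ ≤ 1) (t : ℝ) :
    (sinh t : ℂ) * w + cosh t ≠ 0 := by
  rw [add_comm, ← sub_neg_eq_add, sub_ne_zero]
  refine fun h => (abs_sinh_lt_cosh t).not_ge ?_
  calc cosh t = ‖(cosh t : ℂ)‖ := by rw [Complex.norm_real, norm_of_nonneg (cosh_pos t).le]
    _ = ‖(sinh t : ℂ) * w‖ := by rw [h, norm_neg]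
    _ ≤ |sinh t| := by
      rw [norm_mul, Complex.norm_real, norm_eq_abs]; exact mul_le_of_le_one_right (abs_nonneg _) hw

lemma aTLine_aTLine {s : ℝ} {w : ℂ} (hw : (sinh s : ℂ) * w + cosh s ≠ 0) (t : ℝ) :
    aTLine t (aTLine s w) = aTLine (s + t) w := by
  simp only [aTLine]
  rw [mul_div_assoc', mul_div_assoc', div_add' _ _ _ hw, div_add' _ _ _ hw,
    div_div_div_cancel_right₀ hw, cosh_add, sinh_add]
  push_cast
  ring

lemma iterate_aT_smul_single {m : ℕ} [NeZero m] (t : ℝ) {w : ℂ} (hw : ‖w‖ ≤ 1) (n : ℕ) :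
    (aT t)^[n] (w • EuclideanSpace.single (0 : Fin m) (1 : ℂ)) =
      aTLine (n * t) w • EuclideanSpace.single 0 1 := by
  induction n with
  | zero => simp [aTLine]
  | succ n ih =>
    rw [Function.iterate_succ_apply', ih, aT_smul_single,
      aTLine_aTLine (sinh_mul_add_cosh_ne_zero hw _)]
    congr 2
    push_cast
    ring

lemma aTLine_sub_one {x : ℝ} {w : ℂ} (hw : (sinh x : ℂ) * w + cosh x ≠ 0) :
    aTLine x w - 1 = 2 * (w - 1) / ((w + 1) + (1 - w) * exp (-2 * x)) * exp (-2 * x) := by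
  have hexp : (exp (-2 * x) : ℂ) = exp (-x) ^ 2 := by
    rw [← Complex.ofReal_pow, ← exp_nat_mul]; push_cast; ring_nf
  have hinv : (exp x : ℂ) * exp (-x) = 1 := by
    rw [← Complex.ofReal_mul, ← exp_add, add_neg_cancel, exp_zero, Complex.ofReal_one]
  have hden : (w + 1) + (1 - w) * exp (-2 * x) = 2 * exp (-x) * ((sinh x : ℂ) * w + cosh x) := by
    rw [hexp, sinh_eq, cosh_eq]
    simp only [Complex.ofReal_div, Complex.ofReal_sub, Complex.ofReal_add, Complex.ofReal_ofNat]
    linear_combination -(w + 1) * hinv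
  have hnum : (cosh x * w + sinh x : ℂ) - (sinh x * w + cosh x) = (w - 1) * exp (-x) := by
    rw [← cosh_sub_sinh]; push_cast; ring
  rw [hden, aTLine, div_sub_one hw, hnum, hexp]
  field_simp

lemma tendsto_norm_aTLine_sub_one_mul_exp {w : ℂ} (hw : ‖w‖ ≤ 1) (hw1 : w ≠ -1) :
    Tendsto (fun x => ‖aTLine x w - 1‖ * exp (2 * x)) atTop (𝓝 (2 * ‖w - 1‖ / ‖w + 1‖)) := by
  have hexp : Tendsto (fun x : ℝ => (exp (-2 * x) : ℂ)) atTop (𝓝 0) := by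
    simpa using (tendsto_exp_atBot.comp
      (tendsto_id.const_mul_atTop_of_neg (by norm_num : (-2 : ℝ) < 0))).ofReal
  have hden : Tendsto (fun x : ℝ => ‖(w + 1) + (1 - w) * exp (-2 * x)‖) atTop (𝓝 ‖w + 1‖) := by
    simpa using ((tendsto_const_nhds (x := w + 1)).add (hexp.const_mul (1 - w))).norm
  have hw1' : ‖w + 1‖ ≠ 0 := norm_ne_zero_iff.2 fun h => hw1 (eq_neg_of_add_eq_zero_left h)
  refine ((tendsto_const_nhds (x := 2 * ‖w - 1‖)).div hden hw1').congr fun x => ?_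
  rw [aTLine_sub_one (sinh_mul_add_cosh_ne_zero hw x), norm_mul, norm_div, norm_mul,
    Complex.norm_real, norm_of_nonneg (exp_pos _).le, mul_assoc, ← exp_add]
  simp

lemma tendsto_inv_mul_log_of_tendsto_mul_exp {u : ℕ → ℝ} {a L : ℝ} (hL : L ≠ 0)
    (h : Tendsto (fun n : ℕ => u n * exp (a * n)) atTop (𝓝 L)) :
    Tendsto (fun n : ℕ => 1 / (n : ℝ) * log (u n)) atTop (𝓝 (-a)) := by
  have hlog : Tendsto (fun n : ℕ => log (u n * exp (a * n)) / n) atTop (𝓝 0) :=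
    ((continuousAt_log hL).tendsto.comp h).div_atTop tendsto_natCast_atTop_atTop
  refine (by simpa using hlog.sub_const a : Tendsto _ _ (𝓝 (-a))).congr' ?_
  filter_upwards [h.eventually_ne hL, eventually_ne_atTop 0] with n hv hn
  have hu : u n ≠ 0 := left_ne_zero_of_mul hv
  rw [log_mul hu (exp_pos _).ne', log_exp]
  field_simp
  ring

/-- For `t > 0`, `g = a_t`, and `z = c • e₁` with `|c| ≤ 1`, `c ≠ ±1`,
one has `lim_{n→∞} (1/n) log ‖gⁿ(z) − e₁‖ = −2t`. -/
theorem stmt6 {m : ℕ} [NeZero m] (t : ℝ) (ht : 0 < t) (c : ℂ)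
    (hc : ‖c‖ ≤ 1) (hc1 : c ≠ 1) (hc2 : c ≠ -1) :
    Tendsto (fun n : ℕ => (1 / (n : ℝ)) *
        Real.log ‖(aT (m := m) t)^[n] (c • EuclideanSpace.single 0 (1 : ℂ))
          - EuclideanSpace.single 0 (1 : ℂ)‖)
      atTop (nhds (-2 * t)) := by
  have hL : 2 * ‖c - 1‖ / ‖c + 1‖ ≠ 0 := by
    have : c + 1 ≠ 0 := fun h => hc2 (eq_neg_of_add_eq_zero_left h)
    have : c - 1 ≠ 0 := sub_ne_zero.2 hc1
    positivity
  rw [neg_mul]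
  refine tendsto_inv_mul_log_of_tendsto_mul_exp hL <|
    ((tendsto_norm_aTLine_sub_one_mul_exp hc hc2).comp
      (tendsto_natCast_atTop_atTop.atTop_mul_const ht)).congr fun n => ?_
  calc ‖aTLine (n * t) c - 1‖ * exp (2 * (n * t))
      = ‖(aTLine (n * t) c - 1) • EuclideanSpace.single (0 : Fin m) (1 : ℂ)‖ * exp (2 * t * n) := by
        rw [norm_smul, PiLp.norm_single, norm_one, mul_one]; ring_nf
    _ = _ := by rw [sub_smul, one_smul, iterate_aT_smul_single t hc]
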